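/- Let 0 ≤ ε ≤ b with b ∈ (0,1], T > 0, B = Tb·𝟙 ∈ ℝ^d. Suppose μ, μ^L ∈ ℝ^m satisfy μ − ε·𝟙 ≤ μ^L ≤ μ with μ ∈ [0,1]^m, and C, C^U ∈ ℝ^{d×m} satisfy C ≤ C^U ≤ C + ε·𝟙𝟙ᵀ entrywise, where the first row of C equals b·𝟙ᵀ. Let OPT_LP be the optimal value of max μᵀx s.t. Cx ≤ B, x ≥ 0, and OPT^L the optimal value of max (μ^L)ᵀx s.t. C^U x ≤ B, x ≥ 0. Then OPT_LP − (1 + 1/b)·εT ≤ OPT^L ≤ OPT_LP. -/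

import Mathlib

/-!
Take an optimal `x` of the true LP. The time row forces `∑ xᵢ ≤ T`, so raising every cost by at
most `ε` raises the consumption of `x` by at most `εT`, and `b / (b + ε) • x` is feasible for the
pessimistic costs `C^U`. Its pessimistic reward is at least `b / (b + ε) * (OPT_LP - εT)`, which
exceeds `OPT_LP - (1 + 1/b) εT` because `OPT_LP ≤ T`. Conversely every pessimistic feasible point
is feasible for `C`, and its pessimistic reward is below its true reward.
-/

open Matrix Finset

def lpValues {ι κ : Type*} [Fintype ι] (c : ι → ℝ) (A : Matrix κ ι ℝ) (B : κ → ℝ) : Set ℝ :=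
  {r | ∃ x : ι → ℝ, (∀ i, 0 ≤ x i) ∧ (∀ j, A.mulVec x j ≤ B j) ∧ r = c ⬝ᵥ x}

section

variable {ι κ : Type*} [Fintype ι]

theorem dotProduct_le_add_mul_sum {u v x : ι → ℝ} {ε : ℝ} (huv : ∀ i, u i ≤ v i + ε)
    (hx : 0 ≤ x) : u ⬝ᵥ x ≤ v ⬝ᵥ x + ε * ∑ i, x i := by
  have h : u ≤ v + ε • 1 := fun i => by simpa using huv i
  simpa [add_dotProduct, smul_dotProduct, one_dotProduct] using
    dotProduct_le_dotProduct_of_nonneg_right h hx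

theorem sum_le_of_mulVec_le_of_row_eq {A : Matrix κ ι ℝ} {x : ι → ℝ} {j₀ : κ} {b T : ℝ}
    (hb : 0 < b) (hrow : ∀ i, A j₀ i = b) (hx : (A *ᵥ x) j₀ ≤ T * b) : ∑ i, x i ≤ T := by
  have hrow_mul : (A *ᵥ x) j₀ = b * ∑ i, x i := by
    simp [mulVec, dotProduct, hrow, mul_sum]
  rw [hrow_mul, mul_comm T] at hx
  exact le_of_mul_le_mul_left hx hb

theorem le_of_mem_lpValues_of_mem_upperBounds {c c' : ι → ℝ} {A A' : Matrix κ ι ℝ} {B : κ → ℝ}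
    {v v' : ℝ} (hc : ∀ i, c i ≤ c' i) (hA : ∀ j i, A j i ≤ A' j i)
    (hv : v ∈ lpValues c A' B) (hv' : v' ∈ upperBounds (lpValues c' A B)) : v ≤ v' := by
  obtain ⟨x, hx0, hxA, rfl⟩ := hv
  have hAx (j : κ) : (A *ᵥ x) j ≤ B j :=
    (dotProduct_le_dotProduct_of_nonneg_right (hA j) hx0).trans (hxA j)
  calc c ⬝ᵥ x ≤ c' ⬝ᵥ x := dotProduct_le_dotProduct_of_nonneg_right hc hx0
    _ ≤ v' := hv' ⟨x, hx0, hAx, rfl⟩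

theorem mulVec_div_add_smul_le {C C' : Matrix κ ι ℝ} {x : ι → ℝ} {ε b T : ℝ} (hε : 0 ≤ ε)
    (hb : 0 < b) (hC : ∀ j i, C' j i ≤ C j i + ε) (hx : 0 ≤ x) (hCx : ∀ j, (C *ᵥ x) j ≤ T * b)
    (hsum : ∑ i, x i ≤ T) (j : κ) : (C' *ᵥ (b / (b + ε)) • x) j ≤ T * b := by
  have hC'x : (C' *ᵥ x) j ≤ T * b + ε * T :=
    (dotProduct_le_add_mul_sum (hC j) hx).trans (add_le_add (hCx j) (by gcongr))
  rw [mulVec_smul, Pi.smul_apply, smul_eq_mul]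
  calc b / (b + ε) * (C' *ᵥ x) j ≤ b / (b + ε) * (T * b + ε * T) := by gcongr
    _ = T * b := by field_simp

theorem div_add_mul_sub_le_dotProduct_smul {c c' x : ι → ℝ} {ε b T : ℝ} (hε : 0 ≤ ε)
    (hb : 0 < b) (hc : ∀ i, c i ≤ c' i + ε) (hx : 0 ≤ x) (hsum : ∑ i, x i ≤ T) :
    b / (b + ε) * (c ⬝ᵥ x - ε * T) ≤ c' ⬝ᵥ (b / (b + ε)) • x := by
  rw [dotProduct_smul, smul_eq_mul]
  have hcx := dotProduct_le_add_mul_sum hc hx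
  gcongr
  nlinarith

end

theorem sub_one_add_inv_mul_le_div_add_mul_sub {v ε b T : ℝ} (hε : 0 ≤ ε) (hb : 0 < b)
    (hT : 0 ≤ T) (hvT : v ≤ T) : v - (1 + 1 / b) * ε * T ≤ b / (b + ε) * (v - ε * T) := by
  rw [div_mul_eq_mul_div, le_div_iff₀ (by positivity)]
  field_simp
  -- the gap is `(b ε (T - v) + ε² T (b + 1)) / (b (b + ε))`
  nlinarith [mul_nonneg (mul_nonneg hε hε) hT, mul_nonneg (mul_nonneg hε hb.le) (sub_nonneg.2 hvT),
    mul_nonneg (mul_nonneg (mul_nonneg hε hε) hT) hb.le]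

theorem stmt9_general (m d : ℕ) (hd : 0 < d)
    (μ μL : Fin m → ℝ) (C CU : Matrix (Fin d) (Fin m) ℝ)
    (ε b T : ℝ) (hε0 : 0 ≤ ε) (hb : 0 < b) (hT : 0 < T)
    (B : Fin d → ℝ) (hB : B = fun _ => T * b)
    (hμ : ∀ i, μ i ∈ Set.Icc (0 : ℝ) 1)
    (hμL : ∀ i, μ i - ε ≤ μL i ∧ μL i ≤ μ i)
    (hCU : ∀ j i, C j i ≤ CU j i ∧ CU j i ≤ C j i + ε)
    (hrow : ∀ i, C ⟨0, hd⟩ i = b)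
    (OPTLP OPTL : ℝ)
    (hOPTLP : IsGreatest {r : ℝ | ∃ x : Fin m → ℝ,
      (∀ i, 0 ≤ x i) ∧ (∀ j, C.mulVec x j ≤ B j) ∧ r = μ ⬝ᵥ x} OPTLP)
    (hOPTL : IsGreatest {r : ℝ | ∃ x : Fin m → ℝ,
      (∀ i, 0 ≤ x i) ∧ (∀ j, CU.mulVec x j ≤ B j) ∧ r = μL ⬝ᵥ x} OPTL) :
    OPTLP - (1 + 1 / b) * ε * T ≤ OPTL ∧ OPTL ≤ OPTLP := by
  subst hB
  refine ⟨?_, le_of_mem_lpValues_of_mem_upperBounds (fun i => (hμL i).2) (fun j i => (hCU j i).1)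
    hOPTL.1 hOPTLP.2⟩
  obtain ⟨⟨x, hx0, hCx, rfl⟩, -⟩ := hOPTLP
  have hsum : ∑ i, x i ≤ T := sum_le_of_mulVec_le_of_row_eq hb hrow (hCx _)
  have hμx : μ ⬝ᵥ x ≤ T :=
    (dotProduct_le_dotProduct_of_nonneg_right (fun i => (hμ i).2) hx0).trans
      ((one_dotProduct x).trans_le hsum)
  have hμ_le (i : Fin m) : μ i ≤ μL i + ε := by linarith [(hμL i).1]
  have hscaled_nonneg : 0 ≤ (b / (b + ε)) • x := smul_nonneg (by positivity) hx0
  have hfeas := mulVec_div_add_smul_le hε0 hb (fun j i => (hCU j i).2) hx0 hCx hsum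
  calc μ ⬝ᵥ x - (1 + 1 / b) * ε * T ≤ b / (b + ε) * (μ ⬝ᵥ x - ε * T) :=
        sub_one_add_inv_mul_le_div_add_mul_sub hε0 hb hT.le hμx
    _ ≤ μL ⬝ᵥ (b / (b + ε)) • x := div_add_mul_sub_le_dotProduct_smul hε0 hb hμ_le hx0 hsum
    _ ≤ OPTL := hOPTL.2 ⟨_, hscaled_nonneg, hfeas, rfl⟩

/-- If `μ − ε𝟙 ≤ μ^L ≤ μ` and `C ≤ C^U ≤ C + ε𝟙𝟙ᵀ` with `0 ≤ ε ≤ b` and the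
first row of `C` equal to `b𝟙ᵀ`, then the LCB value `OPT^L` of
`max (μ^L)ᵀx s.t. C^U x ≤ B, x ≥ 0` satisfies
`OPT_LP − (1 + 1/b)·εT ≤ OPT^L ≤ OPT_LP`. -/
theorem stmt9 (m d : ℕ) (hm : 0 < m) (hd : 0 < d)
    (μ μL : Fin m → ℝ) (C CU : Matrix (Fin d) (Fin m) ℝ)
    (ε b T : ℝ) (hε0 : 0 ≤ ε) (hεb : ε ≤ b) (hb : 0 < b) (hb1 : b ≤ 1) (hT : 0 < T)
    (B : Fin d → ℝ) (hB : B = fun _ => T * b)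
    (hμ : ∀ i, μ i ∈ Set.Icc (0 : ℝ) 1)
    (hμL : ∀ i, μ i - ε ≤ μL i ∧ μL i ≤ μ i)
    (hCU : ∀ j i, C j i ≤ CU j i ∧ CU j i ≤ C j i + ε)
    (hrow : ∀ i, C ⟨0, hd⟩ i = b)
    (OPTLP OPTL : ℝ)
    (hOPTLP : IsGreatest {r : ℝ | ∃ x : Fin m → ℝ,
      (∀ i, 0 ≤ x i) ∧ (∀ j, C.mulVec x j ≤ B j) ∧ r = μ ⬝ᵥ x} OPTLP)
    (hOPTL : IsGreatest {r : ℝ | ∃ x : Fin m → ℝ,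
      (∀ i, 0 ≤ x i) ∧ (∀ j, CU.mulVec x j ≤ B j) ∧ r = μL ⬝ᵥ x} OPTL) :
    OPTLP - (1 + 1 / b) * ε * T ≤ OPTL ∧ OPTL ≤ OPTLP :=
  stmt9_general m d hd μ μL C CU ε b T hε0 hb hT B hB hμ hμL hCU hrow OPTLP OPTL hOPTLP hOPTL
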